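/- Let Π ⊆ ℝ³ be the 2-dimensional A-invariant subspace corresponding to the pair of non-real eigenvalues of A = [[1,1,0],[1,2,1],[1,1,1]] (equivalently, Π = {v ∈ ℝ³ : Aⁿ·v → 0 as n → ∞}). Then Π contains no nonzero integer vector. -/

import Mathlib

/-! The orbit `Aⁿ v` of an integer vector consists of integer vectors, and integer vectors
tending to `0` are eventually `0`. Since `det A = 1`, every power of `A` is invertible over `ℤ`,
so `Aⁿ v = 0` forces `v = 0`. -/

open Filter Topology Matrix

theorem Int.eventually_eq_zero_of_tendsto_cast {α ι : Type*} [Finite ι] {l : Filter α}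
    {f : α → ι → ℤ} (hf : Tendsto (fun a i => (f a i : ℝ)) l (𝓝 0)) :
    ∀ᶠ a in l, f a = 0 := by
  have hcoord (i : ι) : ∀ᶠ a in l, f a i = 0 := by
    have hi : Tendsto (fun a => f a i) l (𝓝 0) :=
      Int.isClosedEmbedding_coe_real.isInducing.tendsto_nhds_iff.mpr
        (by simpa [Function.comp_def] using tendsto_pi_nhds.mp hf i)
    simpa [nhds_discrete] using hi
  filter_upwards [eventually_all.mpr hcoord] with a ha
  exact funext ha

theorem Matrix.map_intCast_pow_mulVec {n : Type*} [Fintype n] [DecidableEq n]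
    (B : Matrix n n ℤ) (k : ℕ) (v : n → ℤ) :
    (B.map ((↑) : ℤ → ℝ)) ^ k *ᵥ (fun i => (v i : ℝ)) = fun i => ((B ^ k *ᵥ v) i : ℝ) := by
  funext i
  have := (Int.castRingHom ℝ).map_mulVec (B ^ k) v i
  rw [Matrix.map_pow] at this
  exact this.symm

theorem Matrix.eq_zero_of_tendsto_pow_mulVec_intCast {n : Type*} [Fintype n] [DecidableEq n]
    {B : Matrix n n ℤ} (hB : IsUnit B) {v : n → ℤ}
    (hv : Tendsto (fun k : ℕ => (B.map ((↑) : ℤ → ℝ)) ^ k *ᵥ (fun i => (v i : ℝ)))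
      atTop (𝓝 0)) :
    v = 0 := by
  simp only [map_intCast_pow_mulVec] at hv
  obtain ⟨k, hk⟩ := (Int.eventually_eq_zero_of_tendsto_cast hv).exists
  exact mulVec_injective_of_isUnit (hB.pow k) (hk.trans (mulVec_zero _).symm)

open Filter in
theorem contracting_plane_no_integer_points (v : Fin 3 → ℤ)
    (hv : Tendsto (fun n : ℕ =>
        Matrix.mulVec ((!![1, 1, 0; 1, 2, 1; 1, 1, 1] : Matrix (Fin 3) (Fin 3) ℝ) ^ n)
          (fun i => (v i : ℝ))) atTop (nhds 0)) :
    v = 0 := by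
  set B : Matrix (Fin 3) (Fin 3) ℤ := !![1, 1, 0; 1, 2, 1; 1, 1, 1]
  have hBreal : (!![1, 1, 0; 1, 2, 1; 1, 1, 1] : Matrix (Fin 3) (Fin 3) ℝ) = B.map (↑) := by
    ext i j
    fin_cases i <;> fin_cases j <;> simp [B]
  have hdet : B.det = 1 := by simp [B, det_fin_three]
  rw [hBreal] at hv
  exact eq_zero_of_tendsto_pow_mulVec_intCast
    ((isUnit_iff_isUnit_det B).mpr (hdet ▸ isUnit_one)) hv
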